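/- arXiv:1801.02611 — 2 statements merged into one kernel-verified Lean document; each statement's English description precedes it below -/
import Mathlib

section
/- Let A and B be bounded operators on H = ℓ²(ℤ²) ⊗ ℂ^{2N} whose kernels satisfy A_{m,n} = A_{m−p,n−p} + g(p) B_{m−p,n−p} for all m, n, p ∈ ℤ², where g : ℤ² → ℝ is odd in at least one variable (i.e. there is j ∈ {1,2} with g(n) = −g(R_j n) for the reflection R_j in the j-th coordinate). Then the trace per unit volume τ(A) exists and equals Tr(χ₁ A χ₁) = tr(A_{0,0}). -/
open Filter Topology ContinuousLinearMap

noncomputable section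
set_option synthInstance.maxHeartbeats 1000000
set_option maxHeartbeats 1000000

/-- Lattice sites of the 2-dimensional crystal. -/
abbrev Site := ℤ × ℤ

/-- The Hilbert space ℓ²(ℤ²) ⊗ ℂ^ι (internal degrees of freedom indexed by `ι`). -/
abbrev HS (ι : Type) := lp (fun _ : Site × ι => ℂ) 2

/-- The canonical orthonormal basis vectors δ_n ⊗ e_j. -/
def dvec (ι : Type) [DecidableEq ι] (i : Site × ι) : HS ι := lp.single 2 i 1

/-- The matrix kernel A_{m,n} ∈ End(ℂ^ι) of an operator A. -/
def kerM {ι : Type} [Fintype ι] [DecidableEq ι] (A : HS ι →L[ℂ] HS ι) (m n : Site) :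
    Matrix ι ι ℂ :=
  Matrix.of fun j k => (inner ℂ (dvec ι (m, j)) (A (dvec ι (n, k))) : ℂ)

/-- The operator norm |A_{m,n}| of the matrix kernel. -/
def kerN {ι : Type} [Fintype ι] [DecidableEq ι] (A : HS ι →L[ℂ] HS ι) (m n : Site) : ℝ :=
  ‖Matrix.toEuclideanCLM (𝕜 := ℂ) (kerM A m n)‖

/-- tr(A_{n,n}), the matrix trace of the diagonal kernel. -/
def diagTr {ι : Type} [Fintype ι] [DecidableEq ι] (A : HS ι →L[ℂ] HS ι) (n : Site) : ℂ :=
  (kerM A n n).trace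

/-- Instance search no longer finds this (Prop-valued) instance by itself; supply it. -/
instance instHSNonUnitalCFCReal (ι : Type) :
    NonUnitalContinuousFunctionalCalculus ℝ (HS ι →L[ℂ] HS ι) IsSelfAdjoint :=
  IsSelfAdjoint.instNonUnitalContinuousFunctionalCalculus

/-- |A| = (A*A)^{1/2}, via the continuous functional calculus. -/
def absOp {ι : Type} (A : HS ι →L[ℂ] HS ι) : HS ι →L[ℂ] HS ι :=
  CFC.sqrt (ContinuousLinearMap.adjoint A ∘L A)

/-- A is trace class: ∑ ⟨e_i, |A| e_i⟩ < ∞ over the canonical orthonormal basis. -/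
def IsTraceClass {ι : Type} [Fintype ι] [DecidableEq ι] (A : HS ι →L[ℂ] HS ι) : Prop :=
  Summable fun i : Site × ι => (inner ℂ (dvec ι i) (absOp A (dvec ι i)) : ℂ).re

/-- Tr(|A|). -/
def TraceAbs {ι : Type} [Fintype ι] [DecidableEq ι] (A : HS ι →L[ℂ] HS ι) : ℝ :=
  ∑' i : Site × ι, (inner ℂ (dvec ι i) (absOp A (dvec ι i)) : ℂ).re

/-- Tr(A), computed through the diagonal kernel. -/
def Trace {ι : Type} [Fintype ι] [DecidableEq ι] (A : HS ι →L[ℂ] HS ι) : ℂ :=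
  ∑' i : Site × ι, (inner ℂ (dvec ι i) (A (dvec ι i)) : ℂ)

/-- The square Q_L of (odd) side L = 2k+1: all sites with ‖n‖_∞ ≤ k. -/
def sqL (k : ℕ) : Finset Site := Finset.Icc (-(k : ℤ)) (k : ℤ) ×ˢ Finset.Icc (-(k : ℤ)) (k : ℤ)

/-- A is periodic: A_{m,n} = A_{m-p,n-p}. -/
def IsPeriodic {ι : Type} [Fintype ι] [DecidableEq ι] (A : HS ι →L[ℂ] HS ι) : Prop :=
  ∀ m n p : Site, kerM A (m - p) (n - p) = kerM A m n

/-- The j-th coordinate of a site, j ∈ {1,2}. -/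
def coord (j : Fin 2) (n : Site) : ℤ := if j = 0 then n.1 else n.2

/-- ℓ¹-distance ‖m-n‖₁ on ℤ². -/
def nrm1 (m n : Site) : ℝ := ((|m.1 - n.1| + |m.2 - n.2| : ℤ) : ℝ)

/-- A is near-sighted with constants C, ζ: |A_{m,n}| ≤ C e^{-‖m-n‖₁/ζ}. -/
def IsNearSighted {ι : Type} [Fintype ι] [DecidableEq ι] (A : HS ι →L[ℂ] HS ι)
    (C ζ : ℝ) : Prop :=
  ∀ m n : Site, kerN A m n ≤ C * Real.exp (-nrm1 m n / ζ)

/-- A switch function: nondecreasing from 0 to 1 with values in [0,1]. -/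
structure IsSwitch (Λ : ℤ → ℝ) (nminus nplus : ℤ) : Prop where
  lt : nminus < nplus
  mem : ∀ m, Λ m ∈ Set.Icc (0 : ℝ) 1
  zero : ∀ m, m < nminus → Λ m = 0
  one : ∀ m, nplus ≤ m → Λ m = 1


theorem stmt5 {N : ℕ} (A B : HS (Fin N) →L[ℂ] HS (Fin N)) (g : Site → ℝ)
    (hcov : ∀ m n p : Site,
      kerM A m n = kerM A (m - p) (n - p) + ((g p : ℂ)) • kerM B (m - p) (n - p))
    (hodd : (∀ n : Site, g n = - g (-n.1, n.2)) ∨ (∀ n : Site, g n = - g (n.1, -n.2))) :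
    Tendsto (fun k : ℕ => (∑ n ∈ sqL k, diagTr A n) / (((2 * k + 1) ^ 2 : ℕ) : ℂ))
      atTop (𝓝 (diagTr A 0)) := by
  have hdiag : ∀ n : Site, diagTr A n = diagTr A 0 + (g n : ℂ) * (kerM B 0 0).trace := by
    intro n
    have h := hcov n n n
    simp only [sub_self] at h
    simp [diagTr, h, Matrix.trace_add, Matrix.trace_smul, smul_eq_mul]
  have hcard : ∀ k : ℕ, (sqL k).card = (2 * k + 1) ^ 2 := by
    intro k
    have h1 : ((k : ℤ) + 1 + k).toNat = 2 * k + 1 := by omega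
    simp [sqL, Int.card_Icc, h1, pow_two]
  have hsumg : ∀ k : ℕ, ∑ n ∈ sqL k, (g n : ℂ) = 0 := by
    intro k
    have key : ∑ n ∈ sqL k, (g n : ℂ) = ∑ n ∈ sqL k, -(g n : ℂ) := by
      rcases hodd with h | h
      · refine Finset.sum_equiv
          (Equiv.prodCongr (Equiv.neg ℤ) (Equiv.refl ℤ)) ?_ ?_
        · intro n
          simp only [sqL, Finset.mem_product, Finset.mem_Icc, Equiv.prodCongr_apply,
            Equiv.neg_apply, Equiv.refl_apply, Prod.map]
          omega
        · intro n _
          obtain ⟨a, b⟩ := n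
          simp only [Equiv.prodCongr_apply, Equiv.coe_refl, Equiv.neg_apply,
            Prod.map_apply, id_eq]
          push_cast [h (a, b)]
          ring
      · refine Finset.sum_equiv
          (Equiv.prodCongr (Equiv.refl ℤ) (Equiv.neg ℤ)) ?_ ?_
        · intro n
          simp only [sqL, Finset.mem_product, Finset.mem_Icc, Equiv.prodCongr_apply,
            Equiv.neg_apply, Equiv.refl_apply, Prod.map]
          omega
        · intro n _
          obtain ⟨a, b⟩ := n
          simp only [Equiv.prodCongr_apply, Equiv.coe_refl, Equiv.neg_apply,
            Prod.map_apply, id_eq]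
          push_cast [h (a, b)]
          ring
    have : (2 : ℂ) * ∑ n ∈ sqL k, (g n : ℂ) = 0 := by
      rw [Finset.sum_neg_distrib] at key
      linear_combination key
    simpa using this
  have hfun : ∀ k : ℕ,
      (∑ n ∈ sqL k, diagTr A n) / (((2 * k + 1) ^ 2 : ℕ) : ℂ) = diagTr A 0 := by
    intro k
    have hsum : ∑ n ∈ sqL k, diagTr A n
        = (((2 * k + 1) ^ 2 : ℕ) : ℂ) * diagTr A 0 := by
      calc ∑ n ∈ sqL k, diagTr A n
          = ∑ n ∈ sqL k, (diagTr A 0 + (g n : ℂ) * (kerM B 0 0).trace) := by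
            exact Finset.sum_congr rfl fun n _ => hdiag n
        _ = (sqL k).card • diagTr A 0 + (∑ n ∈ sqL k, (g n : ℂ)) * (kerM B 0 0).trace := by
            rw [Finset.sum_add_distrib, Finset.sum_const, Finset.sum_mul]
        _ = (((2 * k + 1) ^ 2 : ℕ) : ℂ) * diagTr A 0 := by
            rw [hsumg, hcard, zero_mul, add_zero, nsmul_eq_mul]
    have hne : (((2 * k + 1) ^ 2 : ℕ) : ℂ) ≠ 0 := by
      exact_mod_cast (by positivity : ((2 * k + 1) ^ 2 : ℕ) ≠ 0)
    rw [hsum, mul_div_cancel_left₀ _ hne]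
  have : (fun k : ℕ => (∑ n ∈ sqL k, diagTr A n) / (((2 * k + 1) ^ 2 : ℕ) : ℂ))
      = fun _ => diagTr A 0 := funext hfun
  rw [this]
  exact tendsto_const_nhds
end
end

section
/- Let P be a bounded, self-adjoint, periodic, near-sighted projection on H = ℓ²(ℤ²) ⊗ ℂ^N ⊗ ℂ² (P² = P), and let S_z = Id ⊗ Id ⊗ ½σ_z. Define the spin torque-response operator 𝒯 = i P [[P, S_z], [P, X₂]] P. Then 𝒯 is periodic and bounded, its trace per unit volume τ(𝒯) exists and equals Tr(χ₁ 𝒯 χ₁), and moreover τ(𝒯) = 0. -/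
open Filter Topology ContinuousLinearMap

noncomputable section
set_option synthInstance.maxHeartbeats 1000000
set_option maxHeartbeats 1000000

/-- Port helper: the real CFC on operators of `HS ι` (a Prop-valued class); the `ℝ`-module
structure found by instance search comes from `lp`, which is not reducibly defeq to
`Module.complexToReal`, so the library instance has to be transported by hand. -/
instance instNonUnitalCFCRealHS (ι : Type) :
    NonUnitalContinuousFunctionalCalculus ℝ (HS ι →L[ℂ] HS ι) IsSelfAdjoint := by
  convert (IsSelfAdjoint.instNonUnitalContinuousFunctionalCalculus (A := HS ι →L[ℂ] HS ι))
  ext r T x i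
  change r • (T x i) = (r : ℂ) * T x i
  rw [Complex.real_smul]

/-- The matrix of S_z = Id_{ℂ^N} ⊗ ½σ_z on the internal space ℂ^N ⊗ ℂ². -/
def szM (N : ℕ) : Matrix (Fin N × Fin 2) (Fin N × Fin 2) ℂ :=
  Matrix.of fun i k => if i = k then (if i.2 = 0 then (1 / 2 : ℂ) else -(1 / 2)) else 0



section Helpers

set_option linter.unusedSectionVars false

variable {ι : Type} [Fintype ι] [DecidableEq ι]

lemma inner_dvec_left (i : Site × ι) (f : HS ι) : (inner ℂ (dvec ι i) f : ℂ) = f i := by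
  rw [dvec, lp.inner_single_left]
  simp [RCLike.inner_apply]

lemma kerM_apply (A : HS ι →L[ℂ] HS ι) (m n : Site) (j k : ι) :
    kerM A m n j k = (A (dvec ι (n,k))) (m,j) := inner_dvec_left _ _

lemma adj_apply (A : HS ι →L[ℂ] HS ι) (m : Site) (j : ι) (i : Site × ι) :
    (starRingEnd ℂ) ((ContinuousLinearMap.adjoint A (dvec ι (m,j))) i)
      = kerM A m i.1 j i.2 := by
  rw [← inner_dvec_left i (ContinuousLinearMap.adjoint A (dvec ι (m,j)))]
  rw [← inner_conj_symm]
  rw [ContinuousLinearMap.adjoint_inner_left, Complex.conj_conj]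
  rfl

lemma summable_ker (A B : HS ι →L[ℂ] HS ι) (m n : Site) (j k : ι) :
    Summable fun i : Site × ι => kerM A m i.1 j i.2 * kerM B i.1 n i.2 k := by
  have h := lp.summable_inner (𝕜 := ℂ)
    (ContinuousLinearMap.adjoint A (dvec ι (m,j))) (B (dvec ι (n,k)))
  refine h.congr fun i => ?_
  rw [RCLike.inner_apply, adj_apply, kerM_apply, kerM_apply]
  exact mul_comm _ _

lemma kerM_comp_apply (A B : HS ι →L[ℂ] HS ι) (m n : Site) (j k : ι) :
    kerM (A ∘L B) m n j k = ∑' i : Site × ι, kerM A m i.1 j i.2 * kerM B i.1 n i.2 k := by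
  have : kerM (A ∘L B) m n j k
      = (inner ℂ (ContinuousLinearMap.adjoint A (dvec ι (m,j))) (B (dvec ι (n,k))) : ℂ) := by
    rw [ContinuousLinearMap.adjoint_inner_left]; rfl
  rw [this, lp.inner_eq_tsum]
  exact tsum_congr fun i => by
    rw [RCLike.inner_apply, adj_apply, kerM_apply, kerM_apply]; exact mul_comm _ _

lemma clm_ext_dvec {A B : HS ι →L[ℂ] HS ι} (h : ∀ i, A (dvec ι i) = B (dvec ι i)) :
    A = B := by
  refine ContinuousLinearMap.ext fun x => ?_
  have hx := lp.hasSum_single (E := fun _ : Site × ι => ℂ) ENNReal.ofNat_ne_top x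
  have key : ∀ i : Site × ι, lp.single 2 i (x i) = (x i) • dvec ι i := by
    intro i
    rw [dvec, ← lp.single_smul, smul_eq_mul, mul_one]
  have hA : HasSum (fun i => (x i) • A (dvec ι i)) (A x) := by
    simpa only [key, map_smul] using hx.mapL A
  have hB : HasSum (fun i => (x i) • A (dvec ι i)) (B x) := by
    simpa only [key, map_smul, h] using hx.mapL B
  exact hA.unique hB

lemma ext_kerM {A B : HS ι →L[ℂ] HS ι} (h : ∀ m n, kerM A m n = kerM B m n) : A = B := by
  refine clm_ext_dvec fun i => lp.ext (funext fun i' => ?_)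
  have := congrFun (congrFun (h i'.1 i.1) i'.2) i.2
  rwa [kerM_apply, kerM_apply] at this

lemma kerM_add (A B : HS ι →L[ℂ] HS ι) (m n : Site) :
    kerM (A + B) m n = kerM A m n + kerM B m n := by
  ext j k
  simp [kerM, inner_add_right]

lemma kerM_sub (A B : HS ι →L[ℂ] HS ι) (m n : Site) :
    kerM (A - B) m n = kerM A m n - kerM B m n := by
  ext j k
  simp [kerM, inner_sub_right]

lemma kerM_smul (c : ℂ) (A : HS ι →L[ℂ] HS ι) (m n : Site) :
    kerM (c • A) m n = c • kerM A m n := by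
  ext j k
  simp [kerM, inner_smul_right]

lemma diagTr_add (A B : HS ι →L[ℂ] HS ι) (n : Site) :
    diagTr (A + B) n = diagTr A n + diagTr B n := by
  rw [diagTr, diagTr, diagTr, kerM_add, Matrix.trace_add]

lemma diagTr_sub (A B : HS ι →L[ℂ] HS ι) (n : Site) :
    diagTr (A - B) n = diagTr A n - diagTr B n := by
  rw [diagTr, diagTr, diagTr, kerM_sub, Matrix.trace_sub]

lemma diagTr_smul (c : ℂ) (A : HS ι →L[ℂ] HS ι) (n : Site) :
    diagTr (c • A) n = c * diagTr A n := by
  rw [diagTr, diagTr, kerM_smul, Matrix.trace_smul, smul_eq_mul]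

lemma isPeriodic_comp {A B : HS ι →L[ℂ] HS ι} (hA : IsPeriodic A) (hB : IsPeriodic B) :
    IsPeriodic (A ∘L B) := by
  intro m n p
  ext j k
  rw [kerM_comp_apply, kerM_comp_apply]
  let e : Site × ι ≃ Site × ι := (Equiv.subRight p).prodCongr (Equiv.refl ι)
  calc ∑' i : Site × ι, kerM A (m-p) i.1 j i.2 * kerM B i.1 (n-p) i.2 k
      = ∑' i : Site × ι,
          kerM A (m-p) ((e i).1) j ((e i).2) * kerM B ((e i).1) (n-p) ((e i).2) k :=
        (e.tsum_eq _).symm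
    _ = ∑' i : Site × ι, kerM A m i.1 j i.2 * kerM B i.1 n i.2 k := by
        refine tsum_congr fun i => ?_
        have h1 := hA m i.1 p
        have h2 := hB i.1 n p
        simp only [e, Equiv.prodCongr_apply, Equiv.coe_refl, Prod.map, _root_.id,
          Equiv.subRight_apply]
        rw [h1, h2]

lemma isPeriodic_sub {A B : HS ι →L[ℂ] HS ι} (hA : IsPeriodic A) (hB : IsPeriodic B) :
    IsPeriodic (A - B) := by
  intro m n p
  rw [kerM_sub, kerM_sub, hA, hB]

lemma isPeriodic_smul {A : HS ι →L[ℂ] HS ι} (c : ℂ) (hA : IsPeriodic A) :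
    IsPeriodic (c • A) := by
  intro m n p
  rw [kerM_smul, kerM_smul, hA]

lemma diagTr_comp (A B : HS ι →L[ℂ] HS ι) (n : Site) :
    diagTr (A ∘L B) n = ∑' d : Site, ((kerM A n d) * (kerM B d n)).trace := by
  have h1 : diagTr (A ∘L B) n
      = ∑ j : ι, ∑' i : Site × ι, kerM A n i.1 j i.2 * kerM B i.1 n i.2 j := by
    rw [diagTr, Matrix.trace]
    exact Finset.sum_congr rfl fun j _ => by rw [Matrix.diag_apply, kerM_comp_apply]
  rw [h1, ← Summable.tsum_finsetSum (fun j _ => summable_ker A B n n j j)]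
  have hsum : Summable fun i : Site × ι => ∑ j : ι, kerM A n i.1 j i.2 * kerM B i.1 n i.2 j :=
    summable_sum fun j _ => summable_ker A B n n j j
  rw [Summable.tsum_prod' hsum (fun d => (hasSum_fintype _).summable)]
  refine tsum_congr fun d => ?_
  rw [tsum_fintype, Matrix.trace]
  simp only [Matrix.diag_apply, Matrix.mul_apply]
  exact Finset.sum_comm

lemma diagTr_comp_comm {A B : HS ι →L[ℂ] HS ι} (hA : IsPeriodic A) (hB : IsPeriodic B) :
    diagTr (A ∘L B) 0 = diagTr (B ∘L A) 0 := by
  rw [diagTr_comp, diagTr_comp]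
  rw [← (Equiv.neg Site).tsum_eq (fun d => (kerM B 0 d * kerM A d 0).trace)]
  refine tsum_congr fun d => ?_
  have h1 := hB d 0 d
  have h2 := hA 0 d d
  rw [sub_self, zero_sub] at h1 h2
  simp only [Equiv.neg_apply]
  rw [h1, h2]
  exact Matrix.trace_mul_comm _ _

end Helpers

theorem stmt17 {N : ℕ}
    (P Sz Q : HS (Fin N × Fin 2) →L[ℂ] HS (Fin N × Fin 2))
    (C ζ : ℝ) (hζ : 0 < ζ)
    (hsa : IsSelfAdjoint P) (hproj : P ∘L P = P)
    (hper : IsPeriodic P) (hns : IsNearSighted P C ζ)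
    (hSz : ∀ m n : Site, kerM Sz m n = if m = n then szM N else 0)
    (hQ : ∀ m n : Site, kerM Q m n = ((n.2 - m.2 : ℤ) : ℂ) • kerM P m n) :
    IsPeriodic (Complex.I •
        (P ∘L ((P ∘L Sz - Sz ∘L P) ∘L Q - Q ∘L (P ∘L Sz - Sz ∘L P)) ∘L P)) ∧
    Tendsto (fun k : ℕ =>
        (∑ n ∈ sqL k, diagTr (Complex.I •
          (P ∘L ((P ∘L Sz - Sz ∘L P) ∘L Q - Q ∘L (P ∘L Sz - Sz ∘L P)) ∘L P)) n) /
          (((2 * k + 1) ^ 2 : ℕ) : ℂ))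
      atTop (𝓝 (diagTr (Complex.I •
        (P ∘L ((P ∘L Sz - Sz ∘L P) ∘L Q - Q ∘L (P ∘L Sz - Sz ∘L P)) ∘L P)) 0)) ∧
    diagTr (Complex.I •
        (P ∘L ((P ∘L Sz - Sz ∘L P) ∘L Q - Q ∘L (P ∘L Sz - Sz ∘L P)) ∘L P)) 0 = 0 := by
  classical
  -- periodicity of the building blocks
  have hpSz : IsPeriodic Sz := by
    intro m n p
    rw [hSz, hSz]
    simp [sub_left_inj]
  have hpQ : IsPeriodic Q := by
    intro m n p
    rw [hQ, hQ, hper]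
    have hz : ((n - p).2 - (m - p).2 : ℤ) = (n.2 - m.2 : ℤ) := by
      simp [Prod.snd_sub]
    rw [hz]
  -- operator identity  P∘Q + Q∘P = Q
  have hQop : P ∘L Q + Q ∘L P = Q := by
    refine ext_kerM fun m n => ?_
    rw [kerM_add]
    ext j k
    rw [Matrix.add_apply, kerM_comp_apply, kerM_comp_apply,
      ← Summable.tsum_add (summable_ker P Q m n j k) (summable_ker Q P m n j k)]
    have hterm : ∀ i : Site × (Fin N × Fin 2),
        kerM P m i.1 j i.2 * kerM Q i.1 n i.2 k + kerM Q m i.1 j i.2 * kerM P i.1 n i.2 k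
          = ((n.2 - m.2 : ℤ) : ℂ) * (kerM P m i.1 j i.2 * kerM P i.1 n i.2 k) := by
      intro i
      rw [hQ, hQ, Matrix.smul_apply, Matrix.smul_apply, smul_eq_mul, smul_eq_mul]
      push_cast
      ring
    rw [tsum_congr hterm, tsum_mul_left, ← kerM_comp_apply, hproj, hQ,
      Matrix.smul_apply, smul_eq_mul]
  -- P∘Q∘P = 0
  have hPQP : (P ∘L Q) ∘L P = 0 := by
    have h := congrArg (fun X => P ∘L X) hQop
    simp only [comp_add] at h
    rw [← comp_assoc, ← comp_assoc, hproj] at h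
    exact add_eq_left.mp h
  have hprojX : ∀ X : HS (Fin N × Fin 2) →L[ℂ] HS (Fin N × Fin 2),
      P ∘L (P ∘L X) = P ∘L X := fun X => by rw [← comp_assoc, hproj]
  have hPQP0 : P ∘L (Q ∘L P) = 0 := by rw [← comp_assoc]; exact hPQP
  have hPQPX : ∀ X : HS (Fin N × Fin 2) →L[ℂ] HS (Fin N × Fin 2),
      P ∘L (Q ∘L (P ∘L X)) = 0 := fun X => by
    rw [← comp_assoc, ← comp_assoc, hPQP, zero_comp]
  -- normal form of the torque operator
  have hT0 : P ∘L ((P ∘L Sz - Sz ∘L P) ∘L Q - Q ∘L (P ∘L Sz - Sz ∘L P)) ∘L P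
      = (P ∘L Sz) ∘L (Q ∘L P) + (P ∘L Q) ∘L (Sz ∘L P) := by
    simp only [comp_sub, sub_comp, comp_assoc, hproj, hprojX, hPQP0, hPQPX, comp_zero,
      zero_comp, sub_zero, zero_sub]
    try abel
  -- τ(T₀) = 0
  have key : diagTr (P ∘L ((P ∘L Sz - Sz ∘L P) ∘L Q - Q ∘L (P ∘L Sz - Sz ∘L P)) ∘L P) 0
      = 0 := by
    rw [hT0, diagTr_add,
      diagTr_comp_comm (isPeriodic_comp hper hpSz) (isPeriodic_comp hpQ hper),
      diagTr_comp_comm (isPeriodic_comp hper hpQ) (isPeriodic_comp hpSz hper)]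
    have e1 : (Q ∘L P) ∘L (P ∘L Sz) = (Q ∘L P) ∘L Sz := by
      rw [comp_assoc, hprojX, ← comp_assoc]
    have e2 : (Sz ∘L P) ∘L (P ∘L Q) = Sz ∘L (P ∘L Q) := by
      rw [comp_assoc, hprojX]
    rw [e1, e2, diagTr_comp_comm hpSz (isPeriodic_comp hper hpQ), ← diagTr_add, ← add_comp,
      show Q ∘L P + P ∘L Q = Q from by rw [add_comm]; exact hQop,
      diagTr_comp_comm hpQ hpSz, diagTr_comp]
    have hzero : ∀ d : Site, ((kerM Sz 0 d) * (kerM Q d 0)).trace = 0 := by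
      intro d
      by_cases hd : (0 : Site) = d
      · subst hd
        have : kerM Q 0 0 = 0 := by rw [hQ]; simp
        rw [this, Matrix.mul_zero, Matrix.trace_zero]
      · rw [hSz]
        simp [hd]
    rw [tsum_congr hzero, tsum_zero]
  -- periodicity of the full operator
  have hperT : IsPeriodic (Complex.I •
      (P ∘L ((P ∘L Sz - Sz ∘L P) ∘L Q - Q ∘L (P ∘L Sz - Sz ∘L P)) ∘L P)) := by
    refine isPeriodic_smul _ (isPeriodic_comp hper (isPeriodic_comp ?_ hper))
    have hA : IsPeriodic (P ∘L Sz - Sz ∘L P) :=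
      isPeriodic_sub (isPeriodic_comp hper hpSz) (isPeriodic_comp hpSz hper)
    exact isPeriodic_sub (isPeriodic_comp hA hpQ) (isPeriodic_comp hpQ hA)
  refine ⟨hperT, ?_, ?_⟩
  · -- the diagonal trace is constant by periodicity
    have hconst : ∀ n : Site, diagTr (Complex.I •
        (P ∘L ((P ∘L Sz - Sz ∘L P) ∘L Q - Q ∘L (P ∘L Sz - Sz ∘L P)) ∘L P)) n
        = diagTr (Complex.I •
        (P ∘L ((P ∘L Sz - Sz ∘L P) ∘L Q - Q ∘L (P ∘L Sz - Sz ∘L P)) ∘L P)) 0 := by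
      intro n
      have h := hperT n n n
      rw [sub_self] at h
      rw [diagTr, diagTr, ← h]
    have hfun : (fun k : ℕ =>
        (∑ n ∈ sqL k, diagTr (Complex.I •
          (P ∘L ((P ∘L Sz - Sz ∘L P) ∘L Q - Q ∘L (P ∘L Sz - Sz ∘L P)) ∘L P)) n) /
          (((2 * k + 1) ^ 2 : ℕ) : ℂ))
        = fun _ : ℕ => diagTr (Complex.I •
          (P ∘L ((P ∘L Sz - Sz ∘L P) ∘L Q - Q ∘L (P ∘L Sz - Sz ∘L P)) ∘L P)) 0 := by
      funext k
      rw [Finset.sum_congr rfl (fun n _ => hconst n), Finset.sum_const]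
      have h2 : (Finset.Icc (-(k:ℤ)) (k:ℤ)).card = 2 * k + 1 := by
        rw [Int.card_Icc]
        omega
      have hcard : (sqL k).card = (2 * k + 1) ^ 2 := by
        rw [sqL, Finset.card_product, h2]
        ring
      rw [hcard, nsmul_eq_mul]
      have hne : (((2 * k + 1) ^ 2 : ℕ) : ℂ) ≠ 0 := by
        exact_mod_cast Nat.cast_ne_zero.mpr (by positivity)
      exact mul_div_cancel_left₀ _ hne
    rw [hfun]
    exact tendsto_const_nhds
  · rw [diagTr_smul, key, mul_zero]
end
end
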